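/- arXiv:0808.2943 — 2 statements merged into one kernel-verified Lean document; each statement's English description precedes it below -/
import Mathlib

section
/- For every odd l and every a ∈ ℕ, and for every m ≥ 1, ν₂(C_{2^a·l, m}) = ν₂(C_{l,m}) + 3l·(2^a − 1), where C_{l,m} = A_{l, l + (m−1)·2^{1+ν₂(l)}}. -/
open Finset

/-- The 2-adic valuation of `A_{l,n}`, given by `ν₂(A_{l,n}) = l + Σ_{j=-l+1}^{l} ν₂(n+j)`. -/
noncomputable def nuA (l : ℕ) (n : ℤ) : ℕ :=
  l + ∑ j ∈ Finset.Icc (-(l : ℤ) + 1) (l : ℤ), padicValInt 2 (n + j)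

/-- The 2-adic valuation of `C_{l,m} = A_{l, l + (m-1)·2^(1+ν₂(l))}`. -/
noncomputable def nuC (l m : ℕ) : ℕ :=
  nuA l ((l : ℤ) + ((m : ℤ) - 1) * 2 ^ (1 + padicValNat 2 l))

/-! For `L = 2^a·l` with `l` odd, the window summed in `C_{L,m}` is `(N - L, N + L]` with
`N - L = 2^(a+1)(m-1)` and `N + L = 2^(a+1)(m-1+l)`, so `ν₂(C_{L,m}) = L + ν₂((N+L)!/(N-L)!)`.
Legendre's formula `ν₂(k!) = k - s₂(k)` and the invariance of the binary digit sum `s₂` under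
multiplication by powers of 2 give the closed form `ν₂(C_{L,m}) = 3L + s₂(m-1) - s₂(m-1+l)`,
whose only dependence on `a` is through the term `3L`. -/

open scoped Nat

theorem Nat.digits_sum_base_pow_mul {b : ℕ} (hb : 1 < b) (k m : ℕ) :
    (b.digits (b ^ k * m)).sum = (b.digits m).sum := by
  rcases m.eq_zero_or_pos with rfl | hm
  · simp
  · simp [Nat.digits_base_pow_mul hb hm]

theorem padicValNat_two_factorial_add_digits_sum (n : ℕ) :
    padicValNat 2 n ! + (Nat.digits 2 n).sum = n := by
  have legendre := sub_one_mul_padicValNat_factorial (p := 2) n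
  have := Nat.digit_sum_le 2 n
  omega

theorem sum_Ioc_padicValNat_add_padicValNat_factorial (p : ℕ) [Fact p.Prime] {x y : ℕ}
    (h : x ≤ y) : ∑ k ∈ Ioc x y, padicValNat p k + padicValNat p x ! = padicValNat p y ! := by
  induction y, h using Nat.le_induction with
  | base => simp
  | succ y hxy ih =>
    rw [sum_Ioc_succ_top hxy, Nat.factorial_succ,
      padicValNat.mul (Nat.succ_ne_zero y) y.factorial_ne_zero, Nat.succ_eq_add_one]
    omega

theorem sum_Icc_padicValInt_add_eq_sum_Ioc (p : ℕ) {L N : ℕ} (h : L ≤ N) :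
    ∑ j ∈ Icc (-(L : ℤ) + 1) L, padicValInt p (N + j) =
      ∑ k ∈ Ioc (N - L) (N + L), padicValNat p k := by
  refine sum_nbij' (fun j => ((N : ℤ) + j).toNat) (fun k => (k : ℤ) - N)
    ?_ ?_ ?_ ?_ ?_ <;> intro j hj <;> simp only [mem_Icc, mem_Ioc] at hj
  · simp only [mem_Ioc]; omega
  · simp only [mem_Icc]; omega
  · omega
  · omega
  · rw [← padicValInt.of_nat, Int.toNat_of_nonneg (by omega)]

theorem nuA_add_digits_sum {L N : ℕ} (h : L ≤ N) :
    nuA L N + (Nat.digits 2 (N + L)).sum = 3 * L + (Nat.digits 2 (N - L)).sum := by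
  have hwindow := sum_Ioc_padicValNat_add_padicValNat_factorial 2 (x := N - L) (y := N + L)
    (by omega)
  have hlow := padicValNat_two_factorial_add_digits_sum (N - L)
  have hhigh := padicValNat_two_factorial_add_digits_sum (N + L)
  rw [nuA, sum_Icc_padicValInt_add_eq_sum_Ioc 2 h]
  omega

theorem nuC_add_digits_sum {l : ℕ} (hl : Odd l) (a : ℕ) {m : ℕ} (hm : 1 ≤ m) :
    nuC (2 ^ a * l) m + (Nat.digits 2 (m - 1 + l)).sum
      = 3 * (2 ^ a * l) + (Nat.digits 2 (m - 1)).sum := by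
  have hval : padicValNat 2 (2 ^ a * l) = a := by
    rw [padicValNat.mul (by positivity) (by rintro rfl; simp at hl), padicValNat.prime_pow,
      padicValNat.eq_zero_of_not_dvd hl.not_two_dvd_nat, add_zero]
  rw [nuC, hval]
  set N := 2 ^ a * l + 2 ^ (1 + a) * (m - 1) with hNdef
  have hN : ((2 ^ a * l : ℕ) : ℤ) + ((m : ℤ) - 1) * 2 ^ (1 + a) = (N : ℤ) := by
    push_cast [N, Nat.cast_sub hm]; ring
  have hlow : N - 2 ^ a * l = 2 ^ (1 + a) * (m - 1) := Nat.add_sub_cancel_left ..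
  have hhigh : N + 2 ^ a * l = 2 ^ (1 + a) * (m - 1 + l) := by rw [hNdef]; ring
  have := nuA_add_digits_sum (L := 2 ^ a * l) (N := N) (by omega)
  rwa [hlow, hhigh, Nat.digits_sum_base_pow_mul one_lt_two,
    Nat.digits_sum_base_pow_mul one_lt_two, ← hN] at this

theorem nuC_odd_part (l : ℕ) (hl : Odd l) (a m : ℕ) (hm : 1 ≤ m) :
    nuC (2 ^ a * l) m = nuC l m + 3 * l * (2 ^ a - 1) := by
  have hscaled := nuC_add_digits_sum hl a hm
  have hodd := nuC_add_digits_sum hl 0 hm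
  rw [pow_zero, one_mul] at hodd
  have hpow : 1 ≤ 2 ^ a := Nat.one_le_two_pow
  zify [hpow] at *
  linear_combination hscaled - hodd
end

section
/- For all positive integers l and m, ν₂(C_{2l,m}) = ν₂(C_{l,m}) + 3l, where C_{l,m} = A_{l, l + (m−1)·2^{1+ν₂(l)}}. -/
open Finset

/-! Doubling `l` and `n` in `A_{l,n}` replaces each factor `n + j` by the pair `2n + 2j`,
`2n + 2j - 1`: the odd one contributes nothing and the even one contributes `ν₂(n + j) + 1`,
since `n + j ≠ 0` once `n ≥ l` (this is where `m ≥ 1` enters).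
Together with the prefactor this adds `l + 2l = 3l`, and `C_{2l,m}` is exactly `A_{2l,2n}`
for the `n` of `C_{l,m}`. -/

theorem Int.Icc_two_mul_sub_one_two_mul (a b : ℤ) :
    Icc (2 * a - 1) (2 * b) =
      (Icc a b).image (fun k ↦ 2 * k) ∪ (Icc a b).image (fun k ↦ 2 * k - 1) := by
  ext x
  simp only [mem_union, mem_image, mem_Icc]
  constructor
  · rintro ⟨hax, hxb⟩
    rcases Int.even_or_odd x with ⟨k, hk⟩ | ⟨k, hk⟩
    · exact Or.inl ⟨k, by omega, by omega⟩
    · exact Or.inr ⟨k + 1, by omega, by omega⟩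
  · rintro (⟨k, hk, rfl⟩ | ⟨k, hk, rfl⟩) <;> omega

theorem Int.sum_Icc_two_mul_sub_one_two_mul {M : Type*} [AddCommMonoid M] (f : ℤ → M)
    (a b : ℤ) :
    ∑ j ∈ Icc (2 * a - 1) (2 * b), f j = ∑ k ∈ Icc a b, (f (2 * k) + f (2 * k - 1)) := by
  have hdisj : Disjoint ((Icc a b).image (fun k ↦ 2 * k))
      ((Icc a b).image (fun k ↦ 2 * k - 1)) := by
    simp only [disjoint_left, mem_image]
    omega
  rw [Int.Icc_two_mul_sub_one_two_mul, sum_union hdisj,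
    sum_image (fun _ _ _ _ h ↦ by omega), sum_image (fun _ _ _ _ h ↦ by omega),
    sum_add_distrib]

theorem padicValInt_two_mul {x : ℤ} (hx : x ≠ 0) :
    padicValInt 2 (2 * x) = padicValInt 2 x + 1 := by
  rw [mul_comm]
  exact_mod_cast padicValInt_mul_eq_succ (p := 2) x hx

theorem padicValNat_two_mul {n : ℕ} (hn : n ≠ 0) :
    padicValNat 2 (2 * n) = 1 + padicValNat 2 n := by
  rw [padicValNat.mul two_ne_zero hn, padicValNat_self]

theorem nuA_two_mul (l : ℕ) {n : ℤ} (hn : (l : ℤ) ≤ n) :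
    nuA (2 * l) (2 * n) = nuA l n + 3 * l := by
  have hodd (k : ℤ) : padicValInt 2 (2 * n + (2 * k - 1)) = 0 :=
    padicValInt.eq_zero_of_not_dvd (by omega)
  have heven (k : ℤ) (hk : k ∈ Icc (-(l : ℤ) + 1) l) :
      padicValInt 2 (2 * n + 2 * k) = padicValInt 2 (n + k) + 1 := by
    rw [mem_Icc] at hk
    rw [← mul_add, padicValInt_two_mul (by omega)]
  have hinterval : Icc (-((2 * l : ℕ) : ℤ) + 1) ((2 * l : ℕ) : ℤ) =
      Icc (2 * (-(l : ℤ) + 1) - 1) (2 * l) := by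
    push_cast
    ring_nf
  unfold nuA
  rw [hinterval, Int.sum_Icc_two_mul_sub_one_two_mul]
  simp only [hodd, add_zero]
  rw [sum_congr rfl heven, sum_add_distrib, sum_const, Int.card_Icc, smul_eq_mul, mul_one]
  omega

theorem nuC_double (l m : ℕ) (hl : 1 ≤ l) (hm : 1 ≤ m) :
    nuC (2 * l) m = nuC l m + 3 * l := by
  set n : ℤ := l + ((m : ℤ) - 1) * 2 ^ (1 + padicValNat 2 l)
  have hdouble :
      ((2 * l : ℕ) : ℤ) + ((m : ℤ) - 1) * 2 ^ (1 + padicValNat 2 (2 * l)) = 2 * n := by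
    rw [padicValNat_two_mul (by omega)]
    push_cast
    ring
  have hln : (l : ℤ) ≤ n := le_add_of_nonneg_right (mul_nonneg (by omega) (by positivity))
  rw [nuC, hdouble, nuA_two_mul l hln, nuC]
end
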